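/- Let ω_max > 0, let ω : ℝ → ℝ³ be continuous with |ω(t)| ≤ ω_max, let R : ℝ → SO(3) solve R'(t) = R(t)·[ω(t)]ₓ, let å ∈ ℝ³ be a unit vector and a(t) := R(t)ᵀ·å. Suppose the persistent excitation condition fails for all parameters, i.e. for every T > 0 and every μ ∈ (0,1) there exist t and a unit vector x with (1/T)·∫_t^{t+T} (a(s)ᵀx)² ds ≥ 1 − μ. Then for every T > 0 and every sufficiently small ε > 0 there exists t ∈ ℝ such that: (a) for all y ∈ ℝ³ and all s, s' ∈ [t, t+T], |åᵀ·(R(s) − R(s'))·y| ≤ ε·|y| (i.e. R(s)y remains between two planes orthogonal to å distant by ε|y|); and (b) there exists a unit vector n ∈ ℝ³ such that for all y ∈ ℝ³ and all s, s' ∈ [t, t+T], |nᵀ·(R(s)ᵀ − R(s')ᵀ)·y| ≤ ε·|y| (i.e. R(s)ᵀy remains between two parallel planes distant by ε|y|). -/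
import Mathlib

open Matrix MeasureTheory intervalIntegral

noncomputable section

attribute [local instance] Matrix.normedAddCommGroup Matrix.normedSpace

/-- Euclidean norm on ℝ³. -/
def enorm3 (x : Fin 3 → ℝ) : ℝ := Real.sqrt (∑ i, (x i) ^ 2)

/-- Skew-symmetric cross-product matrix `[x]ₓ`. -/
def skew3 (x : Fin 3 → ℝ) : Matrix (Fin 3) (Fin 3) ℝ :=
  !![0, -x 2, x 1; x 2, 0, -x 0; -x 1, x 0, 0]

lemma enorm3_nonneg (v : Fin 3 → ℝ) : 0 ≤ enorm3 v := Real.sqrt_nonneg _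

lemma dot_self_eq (v : Fin 3 → ℝ) : v ⬝ᵥ v = ∑ i, (v i)^2 := by
  simp [dotProduct, sq]

lemma enorm3_sq (v : Fin 3 → ℝ) : enorm3 v ^ 2 = v ⬝ᵥ v := by
  rw [dot_self_eq, enorm3, Real.sq_sqrt]
  exact Finset.sum_nonneg fun i _ => sq_nonneg _

lemma enorm3_neg (v : Fin 3 → ℝ) : enorm3 (-v) = enorm3 v := by
  simp [enorm3]

lemma enorm3_sub_symm (v w : Fin 3 → ℝ) : enorm3 (v - w) = enorm3 (w - v) := by
  rw [← enorm3_neg (v - w)]; ring_nf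

lemma enorm3_le_of_sq_le {v : Fin 3 → ℝ} {c : ℝ} (hc : 0 ≤ c) (h : v ⬝ᵥ v ≤ c^2) :
    enorm3 v ≤ c := by
  nlinarith [enorm3_sq v, enorm3_nonneg v]

lemma abs_dot_le (v w : Fin 3 → ℝ) : |v ⬝ᵥ w| ≤ enorm3 v * enorm3 w := by
  have h : (v ⬝ᵥ w)^2 ≤ (∑ i, (v i)^2) * (∑ i, (w i)^2) := by
    simp only [dotProduct, Fin.sum_univ_three]
    nlinarith [sq_nonneg (v 0 * w 1 - v 1 * w 0), sq_nonneg (v 0 * w 2 - v 2 * w 0),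
      sq_nonneg (v 1 * w 2 - v 2 * w 1)]
  have h2 : (v ⬝ᵥ w)^2 ≤ (enorm3 v * enorm3 w)^2 := by
    rw [mul_pow, enorm3_sq, enorm3_sq, dot_self_eq, dot_self_eq]; exact h
  calc |v ⬝ᵥ w| = Real.sqrt ((v ⬝ᵥ w)^2) := (Real.sqrt_sq_eq_abs _).symm
    _ ≤ Real.sqrt ((enorm3 v * enorm3 w)^2) := Real.sqrt_le_sqrt h2
    _ = enorm3 v * enorm3 w := Real.sqrt_sq (mul_nonneg (enorm3_nonneg v) (enorm3_nonneg w))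

lemma dot_le_enorm3 (v w : Fin 3 → ℝ) : v ⬝ᵥ w ≤ enorm3 v * enorm3 w :=
  (le_abs_self _).trans (abs_dot_le v w)

lemma enorm3_add_le (v w : Fin 3 → ℝ) : enorm3 (v + w) ≤ enorm3 v + enorm3 w := by
  apply enorm3_le_of_sq_le (add_nonneg (enorm3_nonneg v) (enorm3_nonneg w))
  have h1 : (v + w) ⬝ᵥ (v + w) = v ⬝ᵥ v + 2 * (v ⬝ᵥ w) + w ⬝ᵥ w := by
    simp [add_dotProduct, dotProduct_add, dotProduct_comm v w]; ring
  have h3 := dot_le_enorm3 v w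
  have hv := enorm3_sq v
  have hw := enorm3_sq w
  nlinarith [enorm3_nonneg v, enorm3_nonneg w]

lemma skew3_mulVec_bound (w v : Fin 3 → ℝ) :
    enorm3 ((skew3 w) *ᵥ v) ≤ enorm3 w * enorm3 v := by
  apply enorm3_le_of_sq_le (mul_nonneg (enorm3_nonneg w) (enorm3_nonneg v))
  rw [mul_pow, enorm3_sq, enorm3_sq]
  simp only [skew3, mulVec, dotProduct, Fin.sum_univ_three, Matrix.cons_val_zero,
    Matrix.cons_val_one, Matrix.head_cons, Matrix.of_apply, Matrix.cons_val',
    Matrix.empty_val', Matrix.cons_val_fin_one, Matrix.head_fin_const, Matrix.cons_val_two,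
    Matrix.tail_cons]
  nlinarith [sq_nonneg (w 0 * v 0 + w 1 * v 1 + w 2 * v 2)]

lemma skew3_transpose (w : Fin 3 → ℝ) : (skew3 w)ᵀ = -skew3 w := by
  funext i j
  fin_cases i <;> fin_cases j <;> simp [skew3, Matrix.transpose_apply, Matrix.neg_apply]

lemma orth_mulVec_enorm {R : Matrix (Fin 3) (Fin 3) ℝ} (h : Rᵀ * R = 1) (v : Fin 3 → ℝ) :
    enorm3 (R *ᵥ v) = enorm3 v := by
  have : (R *ᵥ v) ⬝ᵥ (R *ᵥ v) = v ⬝ᵥ v := by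
    rw [dotProduct_mulVec, ← mulVec_transpose, mulVec_mulVec, h, one_mulVec]
  unfold enorm3
  rw [← dot_self_eq, ← dot_self_eq, this]

lemma hasDerivAt_transpose_mulVec_dot
    (R : ℝ → Matrix (Fin 3) (Fin 3) ℝ) (M' : Matrix (Fin 3) (Fin 3) ℝ) (t : ℝ)
    (h : HasDerivAt R M' t) (v w : Fin 3 → ℝ) :
    HasDerivAt (fun s => (R s)ᵀ *ᵥ v ⬝ᵥ w) (M'ᵀ *ᵥ v ⬝ᵥ w) t := by
  let L : Matrix (Fin 3) (Fin 3) ℝ →ₗ[ℝ] ℝ := {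
    toFun := fun M => Mᵀ *ᵥ v ⬝ᵥ w
    map_add' := fun M N => by
      simp [Matrix.transpose_add, Matrix.add_mulVec, add_dotProduct]
    map_smul' := fun c M => by
      simp [Matrix.transpose_smul, Matrix.smul_mulVec, smul_dotProduct] }
  have := (LinearMap.toContinuousLinearMap L).hasFDerivAt.comp_hasDerivAt t h
  exact this

set_option maxHeartbeats 1000000 in
/-- if persistent excitation fails for all parameters, then for every
`T > 0` and every sufficiently small `ε > 0` there is a time interval `[t, t+T]` on
which (a) `R(s)y` remains between two planes orthogonal to `å` distant by `ε|y|`, and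
(b) `R(s)ᵀy` remains between two parallel planes distant by `ε|y|`. -/
theorem no_PE_implies_almost_planar
    (ωmax : ℝ) (hωmax : 0 < ωmax)
    (ω : ℝ → Fin 3 → ℝ) (hωc : Continuous ω) (hωb : ∀ t, enorm3 (ω t) ≤ ωmax)
    (R : ℝ → Matrix (Fin 3) (Fin 3) ℝ)
    (hRode : ∀ t, HasDerivAt R (R t * skew3 (ω t)) t)
    (hRorth : ∀ t, (R t)ᵀ * R t = 1) (hRdet : ∀ t, (R t).det = 1)
    (aring : Fin 3 → ℝ) (haring : enorm3 aring = 1)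
    (a : ℝ → Fin 3 → ℝ) (ha : ∀ t, a t = (R t)ᵀ.mulVec aring)
    (hfail : ∀ T μ : ℝ, 0 < T → 0 < μ → μ < 1 →
      ∃ (t : ℝ) (x : Fin 3 → ℝ), enorm3 x = 1 ∧
        1 - μ ≤ (1 / T) * ∫ s in t..(t + T), (a s ⬝ᵥ x) ^ 2) :
    ∀ T : ℝ, 0 < T → ∃ ε₀ : ℝ, 0 < ε₀ ∧ ∀ ε : ℝ, 0 < ε → ε < ε₀ →
      ∃ t : ℝ,
        (∀ (y : Fin 3 → ℝ), ∀ s ∈ Set.Icc t (t + T), ∀ s' ∈ Set.Icc t (t + T),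
          |aring ⬝ᵥ ((R s).mulVec y - (R s').mulVec y)| ≤ ε * enorm3 y) ∧
        (∃ n : Fin 3 → ℝ, enorm3 n = 1 ∧
          ∀ (y : Fin 3 → ℝ), ∀ s ∈ Set.Icc t (t + T), ∀ s' ∈ Set.Icc t (t + T),
            |n ⬝ᵥ ((R s)ᵀ.mulVec y - (R s')ᵀ.mulVec y)| ≤ ε * enorm3 y) := by
  intro T hT
  refine ⟨1, one_pos, fun ε hε hε1 => ?_⟩
  have hRRT : ∀ s, R s * (R s)ᵀ = 1 := fun s => mul_eq_one_comm.mpr (hRorth s)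
  have hTorth : ∀ s, ((R s)ᵀ)ᵀ * (R s)ᵀ = 1 := fun s => by
    rw [Matrix.transpose_transpose]; exact hRRT s
  have ha1 : ∀ s, enorm3 (a s) = 1 := fun s => by
    rw [ha s]; rw [orth_mulVec_enorm (hTorth s)]; exact haring
  set δ : ℝ := ε^2/8 with hδdef
  have hδpos : 0 < δ := by positivity
  have hδ1 : δ < 1 := by nlinarith
  set r : ℝ := δ/(2*ωmax) with hrdef
  have hrpos : 0 < r := by positivity
  set ℓ : ℝ := min r (T/2) with hℓdef
  have hℓpos : 0 < ℓ := lt_min hrpos (by linarith)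
  have hℓr : ℓ ≤ r := min_le_left _ _
  have hℓT : ℓ ≤ T/2 := min_le_right _ _
  set μ : ℝ := min (δ*ℓ/(4*T)) (1/2) with hμdef
  have hμpos : 0 < μ := lt_min (by positivity) (by norm_num)
  have hμ1 : μ < 1 := (min_le_right _ _).trans_lt (by norm_num)
  have hμle : μ ≤ δ*ℓ/(4*T) := min_le_left _ _
  obtain ⟨t, x, hx, hint⟩ := hfail T μ hT hμpos hμ1
  set f : ℝ → ℝ := fun s => a s ⬝ᵥ x with hfdef
  -- derivative of f
  have hfd : ∀ s, HasDerivAt f ((skew3 (ω s))ᵀ *ᵥ a s ⬝ᵥ x) s := by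
    intro s
    have h1 := hasDerivAt_transpose_mulVec_dot R (R s * skew3 (ω s)) s (hRode s) aring x
    have e1 : (R s * skew3 (ω s))ᵀ *ᵥ aring = (skew3 (ω s))ᵀ *ᵥ a s := by
      rw [Matrix.transpose_mul, ← mulVec_mulVec, ha s]
    rw [e1] at h1
    have e2 : f = fun u => (R u)ᵀ *ᵥ aring ⬝ᵥ x := funext fun u => by
      show a u ⬝ᵥ x = _; rw [ha u]
    rw [e2]
    exact h1
  have hdbound : ∀ s, |(skew3 (ω s))ᵀ *ᵥ a s ⬝ᵥ x| ≤ ωmax := by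
    intro s
    have h1 := abs_dot_le ((skew3 (ω s))ᵀ *ᵥ a s) x
    have h2 : enorm3 ((skew3 (ω s))ᵀ *ᵥ a s) ≤ ωmax := by
      rw [skew3_transpose, Matrix.neg_mulVec, enorm3_neg]
      calc enorm3 (skew3 (ω s) *ᵥ a s) ≤ enorm3 (ω s) * enorm3 (a s) :=
            skew3_mulVec_bound _ _
        _ = enorm3 (ω s) := by rw [ha1 s, mul_one]
        _ ≤ ωmax := hωb s
    rw [hx, mul_one] at h1
    exact h1.trans h2
  have hfc : Continuous f := by
    rw [continuous_iff_continuousAt]; exact fun s => (hfd s).continuousAt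
  have hlip : ∀ s s', |f s - f s'| ≤ ωmax * |s - s'| := by
    intro s s'
    have := Convex.norm_image_sub_le_of_norm_hasDerivWithin_le
      (f := f) (f' := fun u => (skew3 (ω u))ᵀ *ᵥ a u ⬝ᵥ x) (s := Set.univ)
      (fun u _ => (hfd u).hasDerivWithinAt)
      (fun u _ => by rw [Real.norm_eq_abs]; exact hdbound u)
      convex_univ (Set.mem_univ s') (Set.mem_univ s)
    simpa [Real.norm_eq_abs] using this
  have hf1 : ∀ s, |f s| ≤ 1 := by
    intro s
    have := abs_dot_le (a s) x
    rwa [ha1 s, hx, one_mul] at this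
  -- the integral bound
  set g : ℝ → ℝ := fun u => 1 - f u ^ 2 with hgdef
  have hgc : Continuous g := continuous_const.sub (hfc.pow 2)
  have hg0 : ∀ u, 0 ≤ g u := by
    intro u
    have h1 := hf1 u
    have h2 := sq_abs (f u)
    have h0 := abs_nonneg (f u)
    have h3 : |f u| ^ 2 ≤ 1 := by nlinarith
    show (0:ℝ) ≤ 1 - f u ^ 2
    linarith
  have hint2 : (∫ u in t..(t+T), g u) ≤ μ * T := by
    have hfi : IntervalIntegrable (fun u => f u ^ 2) volume t (t+T) :=
      (hfc.pow 2).intervalIntegrable _ _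
    have h1 : (∫ u in t..(t+T), g u) = T - ∫ u in t..(t+T), f u ^ 2 := by
      rw [hgdef]
      rw [intervalIntegral.integral_sub _root_.intervalIntegrable_const hfi]
      simp
    have h2 : 1 - μ ≤ (1 / T) * ∫ u in t..(t+T), f u ^ 2 := hint
    have h3 : T * (1 - μ) ≤ ∫ u in t..(t+T), f u ^ 2 := by
      rw [div_mul_eq_mul_div, one_mul] at h2
      linarith [(le_div_iff₀ hT).mp h2]
    rw [h1]; nlinarith
  -- pointwise largeness of |f|
  have hpt : ∀ s ∈ Set.Icc t (t+T), 1 - δ ≤ |f s| := by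
    by_contra hcon
    push_neg at hcon
    obtain ⟨s₀, hs₀, hfs₀⟩ := hcon
    obtain ⟨c, d, hcd, htc, hdt, hdc, hnear⟩ :
        ∃ c d, c ≤ d ∧ t ≤ c ∧ d ≤ t+T ∧ d - c = ℓ ∧
          ∀ u ∈ Set.Icc c d, |u - s₀| ≤ ℓ := by
      rcases le_or_gt s₀ (t + T/2) with h | h
      · refine ⟨s₀, s₀ + ℓ, by linarith, hs₀.1, by linarith, by ring, fun u hu => ?_⟩
        rw [abs_le]; constructor <;> [linarith [hu.1]; linarith [hu.2]]
      · refine ⟨s₀ - ℓ, s₀, by linarith, by linarith, hs₀.2, by ring, fun u hu => ?_⟩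
        rw [abs_le]; constructor <;> [linarith [hu.1]; linarith [hu.2]]
    have hωr : ωmax * r = δ / 2 := by
      rw [hrdef]; field_simp
    have hptwise : ∀ u ∈ Set.Icc c d, δ/2 ≤ g u := by
      intro u hu
      have h1 : |f u| - |f s₀| ≤ |f u - f s₀| := abs_sub_abs_le_abs_sub _ _
      have h2 := hlip u s₀
      have h3 : ωmax * |u - s₀| ≤ ωmax * ℓ :=
        mul_le_mul_of_nonneg_left (hnear u hu) hωmax.le
      have h4 : ωmax * ℓ ≤ ωmax * r := mul_le_mul_of_nonneg_left hℓr hωmax.le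
      have h5 : |f u| ≤ 1 - δ/2 := by linarith
      have h6 := sq_abs (f u)
      have h7 := abs_nonneg (f u)
      show δ/2 ≤ 1 - f u ^ 2
      nlinarith
    have hI1 : ℓ * (δ/2) ≤ ∫ u in c..d, g u := by
      have hmono := intervalIntegral.integral_mono_on hcd
        (_root_.intervalIntegrable_const (μ := volume) (c := δ/2)) (hgc.intervalIntegrable c d) hptwise
      rw [intervalIntegral.integral_const, hdc, smul_eq_mul] at hmono
      exact hmono
    have hsplit : (∫ u in t..(t+T), g u) =
        (∫ u in t..c, g u) + (∫ u in c..d, g u) + (∫ u in d..(t+T), g u) := by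
      rw [intervalIntegral.integral_add_adjacent_intervals
        (hgc.intervalIntegrable t c) (hgc.intervalIntegrable c d)]
      rw [intervalIntegral.integral_add_adjacent_intervals
        (hgc.intervalIntegrable t d) (hgc.intervalIntegrable d (t+T))]
    have h0a : 0 ≤ ∫ u in t..c, g u :=
      intervalIntegral.integral_nonneg htc (fun u _ => hg0 u)
    have h0b : 0 ≤ ∫ u in d..(t+T), g u :=
      intervalIntegral.integral_nonneg hdt (fun u _ => hg0 u)
    have hμT : μ * T ≤ δ * ℓ / 4 := by
      have := mul_le_mul_of_nonneg_right hμle hT.le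
      calc μ * T ≤ δ*ℓ/(4*T) * T := this
        _ = δ * ℓ / 4 := by field_simp
    nlinarith [hint2, hsplit, hI1, h0a, h0b, mul_pos hδpos hℓpos]
  have hne0 : ∀ u ∈ Set.Icc t (t+T), f u ≠ 0 := by
    intro u hu h0
    have := hpt u hu
    rw [h0, abs_zero] at this
    linarith
  have htmem : t ∈ Set.Icc t (t+T) := ⟨le_refl t, by linarith⟩
  -- choose the sign
  set x' : Fin 3 → ℝ := if 0 ≤ f t then x else -x with hx'def
  have hx'1 : enorm3 x' = 1 := by
    rw [hx'def]; split
    · exact hx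
    · rw [enorm3_neg]; exact hx
  have hsign : ∀ s ∈ Set.Icc t (t+T), 1 - δ ≤ a s ⬝ᵥ x' := by
    intro s hs
    have hcontain : Set.uIcc s t ⊆ Set.Icc t (t+T) := by
      rw [Set.uIcc_eq_union]
      apply Set.union_subset
      · exact Set.Icc_subset_Icc hs.1 htmem.2
      · exact Set.Icc_subset_Icc htmem.1 hs.2
    have hsame : (0 ≤ f t → 0 < f s) ∧ (f t < 0 → f s < 0) := by
      constructor
      · intro h0
        by_contra hneg
        push_neg at hneg
        have hfs : f s < 0 := lt_of_le_of_ne hneg (hne0 s hs)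
        have hft : 0 < f t := lt_of_le_of_ne h0 (Ne.symm (hne0 t htmem))
        have : (0:ℝ) ∈ Set.uIcc (f s) (f t) := Set.mem_uIcc.mpr (Or.inl ⟨hfs.le, hft.le⟩)
        obtain ⟨u, hu, hu0⟩ := intermediate_value_uIcc (hfc.continuousOn) this
        exact hne0 u (hcontain hu) hu0
      · intro h0
        by_contra hneg
        push_neg at hneg
        have hfs : 0 < f s := lt_of_le_of_ne hneg (Ne.symm (hne0 s hs))
        have : (0:ℝ) ∈ Set.uIcc (f s) (f t) := Set.mem_uIcc.mpr (Or.inr ⟨h0.le, hfs.le⟩)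
        obtain ⟨u, hu, hu0⟩ := intermediate_value_uIcc (hfc.continuousOn) this
        exact hne0 u (hcontain hu) hu0
    have habs := hpt s hs
    rw [hx'def]
    split
    · rename_i h0
      have := hsame.1 h0
      rw [abs_of_pos this] at habs
      exact habs
    · rename_i h0
      push_neg at h0
      have := hsame.2 h0
      rw [abs_of_neg this] at habs
      rw [dotProduct_neg]
      exact habs
  -- distance bound
  have hdist : ∀ s ∈ Set.Icc t (t+T), enorm3 (a s - x') ≤ ε/2 := by
    intro s hs
    apply enorm3_le_of_sq_le (by positivity)
    have hexp : (a s - x') ⬝ᵥ (a s - x') =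
        a s ⬝ᵥ a s - 2*(a s ⬝ᵥ x') + x' ⬝ᵥ x' := by
      simp [sub_dotProduct, dotProduct_sub, dotProduct_comm x' (a s)]; ring
    have h1 : a s ⬝ᵥ a s = 1 := by
      have := enorm3_sq (a s); rw [ha1 s] at this; nlinarith
    have h2 : x' ⬝ᵥ x' = 1 := by
      have := enorm3_sq x'; rw [hx'1] at this; nlinarith
    have h3 := hsign s hs
    rw [hexp, h1, h2]
    nlinarith [h3, hδdef]
  refine ⟨t, ?_, x', hx'1, ?_⟩
  · -- part (a)
    intro y s hs s' hs'
    have e : aring ⬝ᵥ ((R s).mulVec y - (R s').mulVec y) = (a s - a s') ⬝ᵥ y := by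
      rw [dotProduct_sub, dotProduct_mulVec, dotProduct_mulVec,
        ← mulVec_transpose, ← mulVec_transpose, ← ha s, ← ha s', ← sub_dotProduct]
    rw [e]
    calc |(a s - a s') ⬝ᵥ y| ≤ enorm3 (a s - a s') * enorm3 y := abs_dot_le _ _
      _ ≤ ε * enorm3 y := by
        apply mul_le_mul_of_nonneg_right _ (enorm3_nonneg y)
        have heq : a s - a s' = (a s - x') + (x' - a s') := by abel
        rw [heq]
        have htri := enorm3_add_le (a s - x') (x' - a s')
        have h2 := hdist s hs
        have h3 := hdist s' hs'
        rw [enorm3_sub_symm x' (a s')] at htri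
        linarith
  · -- part (b)
    intro y s hs s' hs'
    have e : x' ⬝ᵥ ((R s)ᵀ.mulVec y - (R s')ᵀ.mulVec y) =
        (R s *ᵥ x' - R s' *ᵥ x') ⬝ᵥ y := by
      rw [dotProduct_sub, dotProduct_mulVec, dotProduct_mulVec,
        vecMul_transpose, vecMul_transpose, ← sub_dotProduct]
    rw [e]
    have hRa : ∀ u, R u *ᵥ a u = aring := fun u => by
      rw [ha u, mulVec_mulVec, hRRT u, one_mulVec]
    have key : ∀ u ∈ Set.Icc t (t+T), enorm3 (R u *ᵥ x' - aring) ≤ ε/2 := by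
      intro u hu
      rw [← hRa u, ← Matrix.mulVec_sub, orth_mulVec_enorm (hRorth u),
        enorm3_sub_symm]
      exact hdist u hu
    calc |(R s *ᵥ x' - R s' *ᵥ x') ⬝ᵥ y|
        ≤ enorm3 (R s *ᵥ x' - R s' *ᵥ x') * enorm3 y := abs_dot_le _ _
      _ ≤ ε * enorm3 y := by
        apply mul_le_mul_of_nonneg_right _ (enorm3_nonneg y)
        have heq : R s *ᵥ x' - R s' *ᵥ x' =
            (R s *ᵥ x' - aring) + (aring - R s' *ᵥ x') := by abel
        rw [heq]
        have htri := enorm3_add_le (R s *ᵥ x' - aring) (aring - R s' *ᵥ x')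
        have h2 := key s hs
        have h3 := key s' hs'
        rw [enorm3_sub_symm aring (R s' *ᵥ x')] at htri
        linarith

end
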